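/- In the no-limit clairvoyance game with stack size n, the strategy profile where player 1 bets n with probability 1 with a winning hand and with probability n/(1+n) with a losing hand (checking otherwise), and player 2 calls a bet of size x with probability 1/(1+x) for all x in (0,n], is a Nash equilibrium. -/

import Mathlib

/-!  A concrete model of the no-limit clairvoyance game with integer bet sizes.
Player 1 is dealt a winning hand (`true`) or losing hand (`false`) with probability
1/2 each, bets an integer `x ∈ {0,…,n}` (0 = check), and player 2 calls or folds.
A strategy for player 1 assigns to each hand a probability distribution over bet
sizes; a strategy for player 2 assigns to each bet size a calling probability. -/

/-- `s` is a valid strategy for player 1 in the clairvoyance game with stack `n`. -/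
def IsStrat1 (n : ℕ) (s : Bool → ℕ → ℝ) : Prop :=
  (∀ h x, 0 ≤ s h x) ∧ (∀ h : Bool, ∑ x ∈ Finset.range (n + 1), s h x = 1)

/-- `s` is a valid strategy for player 2 (a calling probability for each bet size). -/
def IsStrat2 (n : ℕ) (s : ℕ → ℝ) : Prop :=
  ∀ x, 0 ≤ s x ∧ s x ≤ 1

/-- Player 1's payoff with hand `h` after betting `x`, when player 2 calls a bet of
size `x` with probability `s2 x`: a check yields ±0.5, a called bet of `x` yields
±(0.5 + x), and a fold yields +0.5. -/
noncomputable def pay (s2 : ℕ → ℝ) (h : Bool) (x : ℕ) : ℝ :=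
  if x = 0 then (if h then 0.5 else -0.5)
  else s2 x * (if h then (0.5 + (x : ℝ)) else -(0.5 + (x : ℝ))) + (1 - s2 x) * 0.5

/-- Player 1's expected payoff (hands equiprobable); the game is zero-sum. -/
noncomputable def u1 (n : ℕ) (s1 : Bool → ℕ → ℝ) (s2 : ℕ → ℝ) : ℝ :=
  (1/2) * ∑ x ∈ Finset.range (n + 1), s1 true x * pay s2 true x
    + (1/2) * ∑ x ∈ Finset.range (n + 1), s1 false x * pay s2 false x

/-- `(s1, s2)` is a Nash equilibrium of the (zero-sum) clairvoyance game:
no unilateral profitable deviation. -/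
def IsNash (n : ℕ) (s1 : Bool → ℕ → ℝ) (s2 : ℕ → ℝ) : Prop :=
  IsStrat1 n s1 ∧ IsStrat2 n s2 ∧
  (∀ s1', IsStrat1 n s1' → u1 n s1' s2 ≤ u1 n s1 s2) ∧
  (∀ s2', IsStrat2 n s2' → u1 n s1 s2 ≤ u1 n s1 s2')

/-!
Player 2's calling probability `1/(1+x)` makes every bluff of size `x` exactly as good as a check
for the losing hand, while the winning hand earns `1/2 + x/(1+x)`, which grows with `x`; so no
strategy of player 1 earns more than `n/(2(1+n))`. Conversely, player 1's bluffing frequency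
`n/(1+n)` makes player 2 indifferent between calling and folding a bet of `n`, so player 1 earns
`n/(2(1+n))` whatever player 2 does.
-/

open Finset

lemma sum_mul_le_of_le {ι : Type*} {s : Finset ι} {p f : ι → ℝ} {M : ℝ}
    (hp : ∀ i ∈ s, 0 ≤ p i) (hsum : ∑ i ∈ s, p i = 1) (hf : ∀ i ∈ s, f i ≤ M) :
    ∑ i ∈ s, p i * f i ≤ M :=
  calc ∑ i ∈ s, p i * f i ≤ ∑ i ∈ s, p i * M :=
        sum_le_sum fun i hi => mul_le_mul_of_nonneg_left (hf i hi) (hp i hi)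
    _ = M := by rw [← sum_mul, hsum, one_mul]

lemma sum_range_ite_eq_mul {R : Type*} [Semiring R] (n : ℕ) (c : R) (g : ℕ → R) :
    ∑ x ∈ range (n + 1), (if x = n then c else 0) * g x = c * g n := by
  simp_rw [ite_mul, zero_mul, sum_ite_eq', self_mem_range_succ, if_true]

lemma sum_range_ite_ite_mul {R : Type*} [Semiring R] {n : ℕ} (hn : n ≠ 0) (a b : R)
    (g : ℕ → R) :
    ∑ x ∈ range (n + 1), (if x = n then a else if x = 0 then b else 0) * g x
      = a * g n + b * g 0 := by
  rw [sum_eq_add_of_mem n 0 (self_mem_range_succ n) (by simp) hn fun x _ hx => by simp [hx]]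
  simp [Ne.symm hn]

lemma pay_true_of_ne_zero (s2 : ℕ → ℝ) {x : ℕ} (hx : x ≠ 0) :
    pay s2 true x = 0.5 + s2 x * x := by
  simp only [pay, hx, if_false, if_true]
  ring

lemma pay_false_of_ne_zero (s2 : ℕ → ℝ) {x : ℕ} (hx : x ≠ 0) :
    pay s2 false x = 0.5 - s2 x * (1 + x) := by
  simp only [pay, hx, if_false, Bool.false_eq_true]
  ring

section CallingStrategy

variable {n : ℕ} {s2 : ℕ → ℝ} (hs2 : ∀ x, 1 ≤ x → x ≤ n → s2 x = 1 / (1 + (x : ℝ)))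
include hs2

lemma pay_false_eq_of_call {x : ℕ} (hx : x ≤ n) : pay s2 false x = -0.5 := by
  rcases Nat.eq_zero_or_pos x with rfl | hpos
  · simp [pay]
  · rw [pay_false_of_ne_zero s2 hpos.ne', hs2 x hpos hx]
    field_simp
    norm_num

lemma pay_true_le_of_call {x : ℕ} (hx : x ≤ n) : pay s2 true x ≤ 0.5 + n / (1 + n) := by
  rcases Nat.eq_zero_or_pos x with rfl | hpos
  · simp only [pay, if_true]
    linarith [show (0 : ℝ) ≤ n / (1 + n) by positivity]
  · rw [pay_true_of_ne_zero s2 hpos.ne', hs2 x hpos hx, one_div_mul_eq_div, add_le_add_iff_left,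
      div_le_div_iff₀ (by positivity) (by positivity)]
    linarith [(Nat.cast_le.mpr hx : (x : ℝ) ≤ n)]

lemma u1_le_of_call {s1 : Bool → ℕ → ℝ} (hs1 : IsStrat1 n s1) :
    u1 n s1 s2 ≤ n / (2 * (1 + n)) := by
  have hwin : ∑ x ∈ range (n + 1), s1 true x * pay s2 true x ≤ 0.5 + n / (1 + n) :=
    sum_mul_le_of_le (fun x _ => hs1.1 true x) (hs1.2 true) fun x hx =>
      pay_true_le_of_call hs2 (Nat.lt_succ_iff.mp (mem_range.mp hx))
  have hlose : ∑ x ∈ range (n + 1), s1 false x * pay s2 false x = -0.5 := by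
    rw [sum_congr rfl fun x hx => by
        rw [pay_false_eq_of_call hs2 (Nat.lt_succ_iff.mp (mem_range.mp hx))],
      ← sum_mul, hs1.2 false, one_mul]
  have hhalf : (n : ℝ) / (2 * (1 + n)) = n / (1 + n) / 2 := by rw [div_div, mul_comm]
  rw [u1, hlose, hhalf]
  linarith

end CallingStrategy

noncomputable def clairvoyanceBet (n : ℕ) : Bool → ℕ → ℝ :=
  fun h x => if h then (if x = n then 1 else 0)
    else (if x = n then (n : ℝ) / (1 + n) else if x = 0 then 1 - (n : ℝ) / (1 + n) else 0)

lemma isStrat1_clairvoyanceBet {n : ℕ} (hn : n ≠ 0) : IsStrat1 n (clairvoyanceBet n) := by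
  refine ⟨fun h x => ?_, fun h => ?_⟩
  · cases h
    · simp only [clairvoyanceBet, Bool.false_eq_true, if_false]
      split_ifs
      · positivity
      · exact sub_nonneg.mpr (div_le_one_of_le₀ (by linarith) (by positivity))
      · rfl
    · simp only [clairvoyanceBet, if_true]
      split_ifs <;> norm_num
  · cases h
    · have h := sum_range_ite_ite_mul hn ((n : ℝ) / (1 + n)) (1 - n / (1 + n)) fun _ => 1
      simp only [mul_one] at h
      simp only [clairvoyanceBet, Bool.false_eq_true, if_false]
      rw [h, add_sub_cancel]
    · simp [clairvoyanceBet]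

lemma u1_clairvoyanceBet {n : ℕ} (hn : n ≠ 0) (s2 : ℕ → ℝ) :
    u1 n (clairvoyanceBet n) s2 = n / (2 * (1 + n)) := by
  simp only [u1, clairvoyanceBet, if_true, Bool.false_eq_true, if_false]
  rw [sum_range_ite_eq_mul, sum_range_ite_ite_mul hn, pay_true_of_ne_zero s2 hn,
    pay_false_of_ne_zero s2 hn]
  simp only [pay, if_true, Bool.false_eq_true, if_false]
  field_simp
  ring

/-- In the no-limit clairvoyance game with stack size `n`, the profile where player 1
bets `n` with probability 1 with a winning hand and with probability `n/(1+n)` with a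
losing hand (checking otherwise), and player 2 calls a bet of size `x ∈ (0,n]` with
probability `1/(1+x)`, is a Nash equilibrium. -/
theorem clairvoyance_equilibrium (n : ℕ) (hn : 1 ≤ n)
    (s1 : Bool → ℕ → ℝ)
    (hs1 : s1 = fun h x => if h then (if x = n then 1 else 0)
      else (if x = n then (n : ℝ) / (1 + n) else if x = 0 then 1 - (n : ℝ) / (1 + n) else 0))
    (s2 : ℕ → ℝ) (hs2 : ∀ x, 1 ≤ x → x ≤ n → s2 x = 1 / (1 + (x : ℝ)))
    (hs2' : IsStrat2 n s2) :
    IsNash n s1 s2 := by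
  obtain rfl : s1 = clairvoyanceBet n := hs1
  have hn0 : n ≠ 0 := Nat.one_le_iff_ne_zero.mp hn
  refine ⟨isStrat1_clairvoyanceBet hn0, hs2', fun s1' hs1' => ?_, fun s2' _ => ?_⟩
  · rw [u1_clairvoyanceBet hn0]
    exact u1_le_of_call hs2 hs1'
  · rw [u1_clairvoyanceBet hn0, u1_clairvoyanceBet hn0]
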